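/- For all non-negative integers l and m, the identity 4^l · (({1,3}^l) ⧢ ({2}^m)) = (({2}^{l+m}) ш ({2}^l)) − ∑_{k=0}^{l−1} 4^k · C(2l+m−2k, l−k) · (({1,3}^k) ⧢ ({2}^{2l+m−2k})) holds in the ℚ-vector space ℜ freely spanned by all indices (finite sequences of positive integers), where C(n,k) denotes the binomial coefficient. -/

import Mathlib

/-- The multiset of all interleavings (shuffles) of two lists, with multiplicity. -/
def shuffles {α : Type*} : List α → List α → Multiset (List α)
  | [], ys => {ys}
  | x :: xs, [] => {x :: xs}
  | x :: xs, y :: ys =>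
      (shuffles xs (y :: ys)).map (x :: ·) + (shuffles (x :: xs) ys).map (y :: ·)
termination_by xs ys => xs.length + ys.length

/-- The product `⧢` of two indices, as an element of the ℚ-vector space `ℜ = (List ℕ →₀ ℚ)`
spanned by all indices: the formal sum of all interleavings of the two index sequences. -/
noncomputable def shT (k l : List ℕ) : List ℕ →₀ ℚ :=
  ((shuffles k l).map fun w => Finsupp.single w (1 : ℚ)).sum

/-- The word `x^{k_r-1} y x^{k_{r-1}-1} y ⋯ x^{k₁-1} y` over `{x, y}` (`false` = `x`,
`true` = `y`) associated to the index `(k₁, …, k_r)`. -/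
def toWord (ks : List ℕ) : List Bool :=
  (ks.reverse.map fun k => List.replicate (k - 1) false ++ [true]).flatten

def fromWordAux : List Bool → ℕ → List ℕ
  | [], _ => []
  | false :: w, c => fromWordAux w (c + 1)
  | true :: w, c => (c + 1) :: fromWordAux w 0

/-- The index associated to a word over `{x, y}` ending in `y`
(inverse of `toWord` on such words). -/
def fromWord (w : List Bool) : List ℕ := (fromWordAux w 0).reverse

/-- The shuffle product `ш` of two indices, as an element of `ℜ = (List ℕ →₀ ℚ)`: the words of
the two indices are shuffled and each resulting word is converted back to an index. -/
noncomputable def shW (k l : List ℕ) : List ℕ →₀ ℚ :=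
  ((shuffles (toWord k) (toWord l)).map fun w => Finsupp.single (fromWord w) (1 : ℚ)).sum

/-- The index `{1,3}^l = (1,3,1,3,…,1,3)`. -/
def rep13 (l : ℕ) : List ℕ := (List.replicate l ([1, 3] : List ℕ)).flatten


lemma shuffles_nil_left {α : Type*} (q : List α) : shuffles [] q = {q} := by
  rw [shuffles]

lemma shuffles_nil_right {α : Type*} (p : List α) : shuffles p [] = {p} := by
  cases p with
  | nil => rw [shuffles]
  | cons x xs => rw [shuffles]

lemma shuffles_cons_cons {α : Type*} (x y : α) (xs ys : List α) :
    shuffles (x :: xs) (y :: ys)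
      = (shuffles xs (y :: ys)).map (x :: ·) + (shuffles (x :: xs) ys).map (y :: ·) := by
  rw [shuffles]

lemma shuffles_comm {α : Type*} : ∀ (p q : List α), shuffles p q = shuffles q p
  | [], q => by rw [shuffles_nil_left, shuffles_nil_right]
  | x :: xs, [] => by rw [shuffles_nil_left, shuffles_nil_right]
  | x :: xs, y :: ys => by
      rw [shuffles_cons_cons, shuffles_cons_cons y x,
        shuffles_comm xs (y :: ys), shuffles_comm (x :: xs) ys, add_comm]
termination_by p q => p.length + q.length

lemma shuffles_map {α β : Type*} (g : α → β) :
    ∀ (p q : List α), (shuffles p q).map (List.map g) = shuffles (p.map g) (q.map g)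
  | [], q => by simp [shuffles_nil_left]
  | x :: xs, [] => by simp [shuffles_nil_right]
  | x :: xs, y :: ys => by
      have h1 := shuffles_map g xs (y :: ys)
      have h2 := shuffles_map g (x :: xs) ys
      simp only [List.map_cons] at h1 h2 ⊢
      rw [shuffles_cons_cons, shuffles_cons_cons, Multiset.map_add, ← h1, ← h2,
        Multiset.map_map, Multiset.map_map, Multiset.map_map, Multiset.map_map]
      congr 1
termination_by p q => p.length + q.length

lemma perm_of_mem_shuffles {α : Type*} :
    ∀ (p q t : List α), t ∈ shuffles p q → t.Perm (p ++ q)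
  | [], q, t => by
      rw [shuffles_nil_left]
      intro h; simp at h; simp [h]
  | x :: xs, [], t => by
      rw [shuffles_nil_right]
      intro h; simp at h; simp [h]
  | x :: xs, y :: ys, t => by
      rw [shuffles_cons_cons]
      intro h
      rcases Multiset.mem_add.1 h with h | h
      · obtain ⟨w, hw, rfl⟩ := Multiset.mem_map.1 h
        exact (perm_of_mem_shuffles xs (y :: ys) w hw).cons x
      · obtain ⟨w, hw, rfl⟩ := Multiset.mem_map.1 h
        have := (perm_of_mem_shuffles (x :: xs) ys w hw).cons y
        exact this.trans List.perm_middle.symm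
termination_by p q => p.length + q.length

lemma shuffles_append_append {α : Type*} (c d : α) :
    ∀ (p q : List α), shuffles (p ++ [c]) (q ++ [d])
      = (shuffles p (q ++ [d])).map (· ++ [c]) + (shuffles (p ++ [c]) q).map (· ++ [d])
  | [], [] => by
      simp only [List.nil_append]
      rw [shuffles_cons_cons, shuffles_nil_left, shuffles_nil_right]
      simp [add_comm]
  | [], e :: q' => by
      have ih := shuffles_append_append c d [] q'
      simp only [List.nil_append] at ih ⊢
      rw [List.cons_append, shuffles_cons_cons c e, ih,
        shuffles_cons_cons c e]
      simp only [shuffles_nil_left, Multiset.map_add, Multiset.map_map, Multiset.map_singleton,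
        Function.comp, List.cons_append]
      abel
  | e :: p', [] => by
      have ih := shuffles_append_append c d p' []
      simp only [List.nil_append] at ih ⊢
      rw [List.cons_append, shuffles_cons_cons e d, ih,
        shuffles_cons_cons e d]
      simp only [shuffles_nil_right, Multiset.map_add, Multiset.map_map, Multiset.map_singleton,
        Function.comp, List.cons_append]
      abel
  | x :: p', y :: q' => by
      have ih1 := shuffles_append_append c d p' (y :: q')
      have ih2 := shuffles_append_append c d (x :: p') q'
      simp only [List.cons_append] at ih1 ih2 ⊢
      rw [shuffles_cons_cons x y (p' ++ [c]) (q' ++ [d]), ih1, ih2,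
        shuffles_cons_cons x y p' (q' ++ [d]), shuffles_cons_cons x y (p' ++ [c]) q']
      simp only [Multiset.map_add, Multiset.map_map, Function.comp, List.cons_append]
      abel
termination_by p q => p.length + q.length

lemma shuffles_reverse {α : Type*} :
    ∀ (p q : List α), (shuffles p q).map List.reverse = shuffles p.reverse q.reverse
  | [], q => by simp [shuffles_nil_left]
  | x :: xs, [] => by simp [shuffles_nil_right]
  | x :: xs, y :: ys => by
      rw [shuffles_cons_cons, Multiset.map_add, Multiset.map_map, Multiset.map_map,
        List.reverse_cons, List.reverse_cons, shuffles_append_append,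
        ← List.reverse_cons (a := y), ← shuffles_reverse xs (y :: ys),
        ← List.reverse_cons (a := x), ← shuffles_reverse (x :: xs) ys,
        Multiset.map_map, Multiset.map_map]
      congr 1 <;> exact Multiset.map_congr rfl fun w _ => by simp
termination_by p q => p.length + q.length

open Finsupp in
noncomputable def SH {α : Type*} (p q : List α) : List α →₀ ℚ :=
  ((shuffles p q).map fun w => Finsupp.single w 1).sum

noncomputable def Pre {α : Type*} (u : List α) (f : List α →₀ ℚ) : List α →₀ ℚ :=
  Finsupp.mapDomain (u ++ ·) f

lemma mapDomain_msum {α β : Type*} (g : List α → β) (M : Multiset (List α)) :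
    Finsupp.mapDomain g ((M.map fun w => Finsupp.single w (1 : ℚ)).sum)
      = (M.map fun w => Finsupp.single (g w) (1 : ℚ)).sum := by
  rw [show Finsupp.mapDomain g ((M.map fun w => Finsupp.single w (1 : ℚ)).sum)
      = Finsupp.mapDomain.addMonoidHom g ((M.map fun w => Finsupp.single w (1 : ℚ)).sum) from rfl,
    map_multiset_sum, Multiset.map_map]
  exact congrArg _ (Multiset.map_congr rfl fun w _ => by
    simp [Finsupp.mapDomain.addMonoidHom, Finsupp.mapDomain_single])

lemma Pre_SH {α : Type*} (u : List α) (p q : List α) :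
    Pre u (SH p q) = ((shuffles p q).map fun w => Finsupp.single (u ++ w) (1 : ℚ)).sum :=
  mapDomain_msum _ _

lemma SH_nil_left {α : Type*} (q : List α) : SH ([] : List α) q = Finsupp.single q 1 := by
  simp [SH, shuffles_nil_left]

lemma SH_nil_right {α : Type*} (p : List α) : SH p ([] : List α) = Finsupp.single p 1 := by
  simp [SH, shuffles_nil_right]

lemma SH_comm {α : Type*} (p q : List α) : SH p q = SH q p := by
  rw [SH, SH, shuffles_comm]

lemma SH_cons_cons {α : Type*} (x y : α) (xs ys : List α) :
    SH (x :: xs) (y :: ys) = Pre [x] (SH xs (y :: ys)) + Pre [y] (SH (x :: xs) ys) := by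
  rw [Pre_SH, Pre_SH, SH, shuffles_cons_cons, Multiset.map_add, Multiset.sum_add,
    Multiset.map_map, Multiset.map_map]
  rfl

lemma Pre_add {α : Type*} (u : List α) (f g : List α →₀ ℚ) :
    Pre u (f + g) = Pre u f + Pre u g := Finsupp.mapDomain_add

lemma Pre_smul {α : Type*} (u : List α) (c : ℚ) (f : List α →₀ ℚ) :
    Pre u (c • f) = c • Pre u f := Finsupp.mapDomain_smul c f

lemma Pre_zero {α : Type*} (u : List α) : Pre u (0 : List α →₀ ℚ) = 0 :=
  Finsupp.mapDomain_zero

lemma Pre_sum {α : Type*} (u : List α) (s : Finset ℕ) (f : ℕ → List α →₀ ℚ) :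
    Pre u (∑ j ∈ s, f j) = ∑ j ∈ s, Pre u (f j) :=
  map_sum (Finsupp.mapDomain.addMonoidHom (u ++ ·)) f s

lemma Pre_Pre {α : Type*} (u v : List α) (f : List α →₀ ℚ) :
    Pre u (Pre v f) = Pre (u ++ v) f := by
  rw [Pre, Pre, Pre, ← Finsupp.mapDomain_comp]
  exact congrFun (congrArg _ (funext fun w => (List.append_assoc u v w).symm)) f

lemma Pre_single {α : Type*} (u w : List α) :
    Pre u (Finsupp.single w (1 : ℚ)) = Finsupp.single (u ++ w) 1 := Finsupp.mapDomain_single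

-- words
def zw (n : ℕ) : List Bool := (List.replicate n [false, true]).flatten
def Lk (j : ℕ) : List (List Bool) := (List.replicate j [[false, false, true], [true]]).flatten
def Rb (n : ℕ) : List (List Bool) := List.replicate n [false, true]

lemma zw_succ (n : ℕ) : zw (n + 1) = false :: true :: zw n := by
  simp [zw, List.replicate_succ]

lemma Lk_succ (j : ℕ) : Lk (j + 1) = [false, false, true] :: [true] :: Lk j := by
  simp [Lk, List.replicate_succ]

lemma Rb_succ (n : ℕ) : Rb (n + 1) = [false, true] :: Rb n := List.replicate_succ ..

noncomputable def TT (j n : ℕ) : List Bool →₀ ℚ :=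
  Finsupp.mapDomain List.flatten (SH (Lk j) (Rb n))

noncomputable def WW (j n : ℕ) : List Bool →₀ ℚ :=
  Finsupp.mapDomain List.flatten (SH ([true] :: Lk j) (Rb n))

lemma mapDomain_flatten_Pre (B : List Bool) (f : List (List Bool) →₀ ℚ) :
    Finsupp.mapDomain List.flatten (Finsupp.mapDomain (B :: ·) f)
      = Pre B (Finsupp.mapDomain List.flatten f) := by
  rw [Pre, ← Finsupp.mapDomain_comp, ← Finsupp.mapDomain_comp]
  exact congrFun (congrArg _ (funext fun s => by simp [Function.comp])) f

lemma Pre_cons {α : Type*} (x : α) (f : List α →₀ ℚ) :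
    Finsupp.mapDomain (x :: ·) f = Pre [x] f := by
  rw [Pre]
  exact congrFun (congrArg _ (funext fun w => (List.singleton_append).symm)) f

lemma TT_zero (n : ℕ) : TT 0 n = Finsupp.single (zw n) 1 := by
  rw [TT, show Lk 0 = [] from rfl, SH_nil_left, Finsupp.mapDomain_single]
  rfl

lemma WW_zero_n (j : ℕ) : WW j 0 = Pre [true] (TT j 0) := by
  rw [WW, TT, show Rb 0 = [] from rfl, SH_nil_right, SH_nil_right,
    Finsupp.mapDomain_single, Finsupp.mapDomain_single, Pre_single]
  rfl

lemma TT_succ_zero (j : ℕ) : TT (j + 1) 0 = Pre [false, false, true] (WW j 0) := by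
  rw [TT, WW, show Rb 0 = [] from rfl, SH_nil_right, SH_nil_right, Lk_succ,
    Finsupp.mapDomain_single, Finsupp.mapDomain_single, Pre_single]
  rfl

lemma flatPre (B : List Bool) (f : List (List Bool) →₀ ℚ) :
    Finsupp.mapDomain List.flatten (Pre [B] f) = Pre B (Finsupp.mapDomain List.flatten f) := by
  rw [Pre, Pre, ← Finsupp.mapDomain_comp, ← Finsupp.mapDomain_comp]
  exact congrFun (congrArg _ (funext fun s => by simp)) f

lemma TT_succ_succ (j n : ℕ) :
    TT (j + 1) (n + 1)
      = Pre [false, false, true] (WW j (n + 1)) + Pre [false, true] (TT (j + 1) n) := by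
  rw [TT, Lk_succ, Rb_succ, SH_cons_cons, Finsupp.mapDomain_add, flatPre, flatPre,
    ← Rb_succ, ← Lk_succ, ← WW, ← TT]

lemma WW_succ (j n : ℕ) :
    WW j (n + 1) = Pre [true] (TT j (n + 1)) + Pre [false, true] (WW j n) := by
  rw [WW, Rb_succ, SH_cons_cons, Finsupp.mapDomain_add, flatPre, flatPre,
    ← Rb_succ, ← TT, ← WW]

lemma WW_split (j n : ℕ) :
    WW j n = Pre [true] (TT j n)
      + (if n = 0 then 0 else Pre [false, true] (WW j (n - 1))) := by
  cases n with
  | zero => simp [WW_zero_n]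
  | succ n => simp [WW_succ]

lemma TT_split (j n : ℕ) (h : 0 < j + n) :
    TT j n = (if j = 0 then 0 else Pre [false, false, true] (WW (j - 1) n))
      + (if n = 0 then 0 else Pre [false, true] (TT j (n - 1))) := by
  match j, n with
  | 0, 0 => omega
  | 0, n + 1 => simp [TT_zero, zw_succ, Pre_single]
  | j + 1, 0 => simpa using TT_succ_zero j
  | j + 1, n + 1 => simpa using TT_succ_succ j n

def cA (a b j : ℕ) : ℚ := (4:ℚ)^j * ((a + b - 2*j).choose (b - j) : ℚ)
def cB (a b j : ℕ) : ℚ := 2 * (4:ℚ)^j * ((a + b - 2*j - 1).choose (b - j - 1) : ℚ)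

def PA (a b : ℕ) : Prop :=
  SH (zw a) (zw b) = ∑ j ∈ Finset.range (min a b + 1), cA a b j • TT j (a + b - 2*j)

def PB (a b : ℕ) : Prop :=
  SH (true :: zw a) (zw b)
    = (∑ j ∈ Finset.range (min a b + 1), cA a b j • Pre [true] (TT j (a + b - 2*j)))
      + ∑ j ∈ Finset.range (min (a+1) b), cB a b j • Pre [false, true] (WW j (a + b - 2*j - 1))

lemma sum_ext {M : Type*} [AddCommMonoid M] [Module ℚ M] {K K' : ℕ} (h : K ≤ K')
    (f : ℕ → ℚ) (v : ℕ → M) :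
    ∑ j ∈ Finset.range K, f j • v j
      = ∑ j ∈ Finset.range K', (if j < K then f j else 0) • v j := by
  rw [← Finset.sum_subset (Finset.range_subset_range.2 h) (fun x _ hx => by
    rw [if_neg (by simpa using hx), zero_smul])]
  exact Finset.sum_congr rfl fun j hj => by rw [if_pos (Finset.mem_range.1 hj)]

lemma pascalN (p q : ℕ) :
    (p+q+1).choose q + (p+q+1).choose p = (p+q+2).choose (q+1) := by
  rw [show p+q+2 = (p+q+1)+1 from rfl, Nat.choose_succ_succ]
  congr 1
  rw [← Nat.choose_symm (show q+1 ≤ p+q+1 by omega)]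
  congr 1
  omega

lemma symmN {a c j : ℕ} (h1 : j ≤ a) (h2 : j ≤ c) :
    (c + a - 2*j).choose (a - j) = (a + c - 2*j).choose (c - j) := by
  rw [show c + a - 2*j = a + c - 2*j by omega,
    ← Nat.choose_symm (show c - j ≤ a + c - 2*j by omega)]
  congr 1
  omega

lemma my_smul_ite_zero (c : ℚ) (P : Prop) [Decidable P] (x : List Bool →₀ ℚ) :
    c • (if P then (0 : List Bool →₀ ℚ) else x) = (if P then 0 else c) • x := by
  split_ifs <;> simp

lemma star (a c : ℕ) (hB1 : PB a c) (hB2 : PB c a) :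
    SH (true :: zw a) (zw c) + SH (true :: zw c) (zw a)
      = ∑ j ∈ Finset.range (min a c + 1), (2 * cA a c j) • WW j (a + c - 2*j) := by
  set K := a + c + 2 with hK
  set vT : ℕ → (List Bool →₀ ℚ) := fun j => Pre [true] (TT j (a + c - 2*j)) with hvT
  set vW : ℕ → (List Bool →₀ ℚ) := fun j => Pre [false, true] (WW j (a + c - 2*j - 1)) with hvW
  rw [hB1, hB2]
  -- normalize the four sums to range K
  have hT1 : (∑ j ∈ Finset.range (min a c + 1), cA a c j • Pre [true] (TT j (a + c - 2*j)))
      = ∑ j ∈ Finset.range K, (if j < min a c + 1 then cA a c j else 0) • vT j :=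
    sum_ext (by omega) _ _
  have hW1 : (∑ j ∈ Finset.range (min (a+1) c), cB a c j • Pre [false, true] (WW j (a + c - 2*j - 1)))
      = ∑ j ∈ Finset.range K, (if j < min (a+1) c then cB a c j else 0) • vW j :=
    sum_ext (by omega) _ _
  have hT2 : (∑ j ∈ Finset.range (min c a + 1), cA c a j • Pre [true] (TT j (c + a - 2*j)))
      = ∑ j ∈ Finset.range K, (if j < min a c + 1 then cA c a j else 0) • vT j := by
    rw [Nat.min_comm c a]
    rw [show (∑ j ∈ Finset.range (min a c + 1), cA c a j • Pre [true] (TT j (c + a - 2*j)))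
        = ∑ j ∈ Finset.range (min a c + 1), cA c a j • vT j from
      Finset.sum_congr rfl fun j _ => by rw [hvT, show c + a - 2*j = a + c - 2*j by omega]]
    exact sum_ext (by omega) _ _
  have hW2 : (∑ j ∈ Finset.range (min (c+1) a), cB c a j • Pre [false, true] (WW j (c + a - 2*j - 1)))
      = ∑ j ∈ Finset.range K, (if j < min (c+1) a then cB c a j else 0) • vW j := by
    rw [show (∑ j ∈ Finset.range (min (c+1) a), cB c a j • Pre [false, true] (WW j (c + a - 2*j - 1)))
        = ∑ j ∈ Finset.range (min (c+1) a), cB c a j • vW j from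
      Finset.sum_congr rfl fun j _ => by rw [hvW, show c + a - 2*j = a + c - 2*j by omega]]
    exact sum_ext (by omega) _ _
  rw [hT1, hW1, hT2, hW2]
  -- expand the RHS
  have hR : (∑ j ∈ Finset.range (min a c + 1), (2 * cA a c j) • WW j (a + c - 2*j))
      = (∑ j ∈ Finset.range K, (if j < min a c + 1 then 2 * cA a c j else 0) • vT j)
        + ∑ j ∈ Finset.range K,
            (if j < min a c + 1 then (if a + c - 2*j = 0 then 0 else 2 * cA a c j) else 0) • vW j := by
    rw [show (∑ j ∈ Finset.range (min a c + 1), (2 * cA a c j) • WW j (a + c - 2*j))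
        = ∑ j ∈ Finset.range (min a c + 1),
            ((2 * cA a c j) • vT j
              + (if a + c - 2*j = 0 then 0 else 2 * cA a c j) • vW j) from
      Finset.sum_congr rfl fun j _ => by
        rw [WW_split, smul_add, my_smul_ite_zero]]
    rw [Finset.sum_add_distrib]
    congr 1
    · exact sum_ext (by omega) _ _
    · exact sum_ext (by omega) _ _
  rw [hR, add_add_add_comm, ← Finset.sum_add_distrib, ← Finset.sum_add_distrib]
  congr 1
  · refine Finset.sum_congr rfl fun j _ => ?_
    rw [← add_smul]
    congr 1
    by_cases h : j < min a c + 1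
    · rw [if_pos h, if_pos h, if_pos h, cA, cA, symmN (show j ≤ a by omega) (show j ≤ c by omega)]
      ring
    · rw [if_neg h, if_neg h, if_neg h]
      simp
  · refine Finset.sum_congr rfl fun j _ => ?_
    rw [← add_smul]
    congr 1
    by_cases h1 : j < a ∧ j < c
    · rw [if_pos (by omega), if_pos (by omega), if_pos (by omega), if_neg (by omega)]
      obtain ⟨p, rfl⟩ : ∃ p, a = j + p + 1 := ⟨a - j - 1, by omega⟩
      obtain ⟨q, rfl⟩ : ∃ q, c = j + q + 1 := ⟨c - j - 1, by omega⟩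
      rw [cB, cB, cA, show (j+p+1) + (j+q+1) - 2*j - 1 = p+q+1 by omega,
        show (j+q+1) + (j+p+1) - 2*j - 1 = p+q+1 by omega,
        show (j+q+1) - j - 1 = q by omega, show (j+p+1) - j - 1 = p by omega,
        show (j+p+1) + (j+q+1) - 2*j = p+q+2 by omega, show (j+q+1) - j = q+1 by omega,
        ← pascalN p q]
      push_cast
      ring
    by_cases h2 : j = a ∧ a < c
    · rw [if_pos (by omega), if_neg (by omega), if_pos (by omega), if_neg (by omega),
        cB, cA, show a + c - 2*j - 1 = c - j - 1 by omega, Nat.choose_self,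
        show a + c - 2*j = c - j by omega, Nat.choose_self]
      ring
    by_cases h3 : j = c ∧ c < a
    · rw [if_neg (by omega), if_pos (by omega), if_pos (by omega), if_neg (by omega),
        cB, cA, show c + a - 2*j - 1 = a - j - 1 by omega, Nat.choose_self,
        show c - j = 0 by omega, Nat.choose_zero_right]
      ring
    · rw [if_neg (by omega), if_neg (by omega)]
      by_cases h : j < min a c + 1
      · rw [if_pos h, if_pos (by omega)]
        simp
      · rw [if_neg h]
        simp

lemma step_PB (a c : ℕ) (hPA : PA a (c+1)) (h1 : PB a c) (h2 : PB c a) : PB a (c+1) := by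
  unfold PB
  rw [zw_succ c, SH_cons_cons true false (zw a) (true :: zw c), ← zw_succ c,
    SH_cons_cons true true (zw a) (zw c), SH_comm (zw a) (true :: zw c), ← Pre_add,
    add_comm (SH (true :: zw c) (zw a)), star a c h1 h2]
  unfold PA at hPA
  rw [hPA, Pre_sum, Pre_sum, Pre_sum]
  congr 1
  · exact Finset.sum_congr rfl fun j _ => Pre_smul _ _ _
  · rw [show min a c + 1 = min (a+1) (c+1) by omega]
    refine Finset.sum_congr rfl fun j hj => ?_
    simp only [Pre_smul]
    rw [Pre_Pre]
    rw [show ([false] ++ [true] : List Bool) = [false, true] from rfl,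
      show a + c - 2*j = a + (c+1) - 2*j - 1 by omega]
    congr 1
    rw [cB, cA, show a + (c+1) - 2*j - 1 = a + c - 2*j by omega,
      show (c+1) - j - 1 = c - j by omega]
    ring

lemma pascalN2 (p q : ℕ) :
    (p+q+1).choose (q+1) + (p+q+1).choose (p+1) = (p+q+2).choose (q+1) := by
  have h1 : (p+q+1).choose (p+1) = (p+q+1).choose q := by
    have h := Nat.choose_symm (show p+1 ≤ p+q+1 by omega)
    rw [show p+q+1-(p+1) = q by omega] at h
    exact h.symm
  rw [h1, add_comm]
  exact (Nat.choose_succ_succ (p+q+1) q).symm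

lemma chooseswap (p q : ℕ) : (p+q).choose p = (p+q).choose q := by
  have h := Nat.choose_symm (show q ≤ p+q by omega)
  rwa [show p+q-q = p by omega] at h

lemma step_PA (a' b' : ℕ) (hB1 : PB a' (b'+1)) (hB2 : PB b' (a'+1)) : PA (a'+1) (b'+1) := by
  unfold PA
  unfold PB at hB1 hB2
  rw [zw_succ a', zw_succ b',
    SH_cons_cons false false (true :: zw a') (true :: zw b'),
    ← zw_succ a', ← zw_succ b',
    SH_comm (zw (a'+1)) (true :: zw b'), hB1, hB2]
  simp only [Pre_add, Pre_sum, Pre_smul, Pre_Pre, List.cons_append, List.nil_append]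
  set K := a' + b' + 2 with hK
  set OT : ℕ → (List Bool →₀ ℚ) := fun j => Pre [false, true] (TT j (a' + b' + 1 - 2*j)) with hOT
  set OW : ℕ → (List Bool →₀ ℚ) := fun j => Pre [false, false, true] (WW j (a' + b' - 2*j)) with hOW
  have hT1 : (∑ j ∈ Finset.range (min a' (b'+1) + 1),
        cA a' (b'+1) j • Pre [false, true] (TT j (a' + (b'+1) - 2*j)))
      = ∑ j ∈ Finset.range K, (if j < min a' (b'+1) + 1 then cA a' (b'+1) j else 0) • OT j := by
    rw [show (∑ j ∈ Finset.range (min a' (b'+1) + 1),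
          cA a' (b'+1) j • Pre [false, true] (TT j (a' + (b'+1) - 2*j)))
        = ∑ j ∈ Finset.range (min a' (b'+1) + 1), cA a' (b'+1) j • OT j from
      Finset.sum_congr rfl fun j _ => by
        rw [hOT, show a' + (b'+1) - 2*j = a' + b' + 1 - 2*j by omega]]
    exact sum_ext (by omega) _ _
  have hW1 : (∑ j ∈ Finset.range (min (a'+1) (b'+1)),
        cB a' (b'+1) j • Pre [false, false, true] (WW j (a' + (b'+1) - 2*j - 1)))
      = ∑ j ∈ Finset.range K, (if j < min (a'+1) (b'+1) then cB a' (b'+1) j else 0) • OW j := by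
    rw [show (∑ j ∈ Finset.range (min (a'+1) (b'+1)),
          cB a' (b'+1) j • Pre [false, false, true] (WW j (a' + (b'+1) - 2*j - 1)))
        = ∑ j ∈ Finset.range (min (a'+1) (b'+1)), cB a' (b'+1) j • OW j from
      Finset.sum_congr rfl fun j _ => by
        rw [hOW, show a' + (b'+1) - 2*j - 1 = a' + b' - 2*j by omega]]
    exact sum_ext (by omega) _ _
  have hT2 : (∑ j ∈ Finset.range (min b' (a'+1) + 1),
        cA b' (a'+1) j • Pre [false, true] (TT j (b' + (a'+1) - 2*j)))
      = ∑ j ∈ Finset.range K, (if j < min b' (a'+1) + 1 then cA b' (a'+1) j else 0) • OT j := by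
    rw [show (∑ j ∈ Finset.range (min b' (a'+1) + 1),
          cA b' (a'+1) j • Pre [false, true] (TT j (b' + (a'+1) - 2*j)))
        = ∑ j ∈ Finset.range (min b' (a'+1) + 1), cA b' (a'+1) j • OT j from
      Finset.sum_congr rfl fun j _ => by
        rw [hOT, show b' + (a'+1) - 2*j = a' + b' + 1 - 2*j by omega]]
    exact sum_ext (by omega) _ _
  have hW2 : (∑ j ∈ Finset.range (min (b'+1) (a'+1)),
        cB b' (a'+1) j • Pre [false, false, true] (WW j (b' + (a'+1) - 2*j - 1)))
      = ∑ j ∈ Finset.range K, (if j < min (b'+1) (a'+1) then cB b' (a'+1) j else 0) • OW j := by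
    rw [show (∑ j ∈ Finset.range (min (b'+1) (a'+1)),
          cB b' (a'+1) j • Pre [false, false, true] (WW j (b' + (a'+1) - 2*j - 1)))
        = ∑ j ∈ Finset.range (min (b'+1) (a'+1)), cB b' (a'+1) j • OW j from
      Finset.sum_congr rfl fun j _ => by
        rw [hOW, show b' + (a'+1) - 2*j - 1 = a' + b' - 2*j by omega]]
    exact sum_ext (by omega) _ _
  rw [hT1, hW1, hT2, hW2]
  -- now the right-hand side (the closed form for A)
  have hR : (∑ j ∈ Finset.range (min (a'+1) (b'+1) + 1),
        cA (a'+1) (b'+1) j • TT j ((a'+1) + (b'+1) - 2*j))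
      = (∑ i ∈ Finset.range K, (if i < min (a'+1) (b'+1) then cA (a'+1) (b'+1) (i+1) else 0) • OW i)
        + ∑ j ∈ Finset.range K,
            (if j < min (a'+1) (b'+1) + 1 then
              (if (a'+1) + (b'+1) - 2*j = 0 then 0 else cA (a'+1) (b'+1) j) else 0) • OT j := by
    rw [show (∑ j ∈ Finset.range (min (a'+1) (b'+1) + 1),
          cA (a'+1) (b'+1) j • TT j ((a'+1) + (b'+1) - 2*j))
        = ∑ j ∈ Finset.range (min (a'+1) (b'+1) + 1),
            ((if j = 0 then 0 else cA (a'+1) (b'+1) j) •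
                Pre [false, false, true] (WW (j-1) ((a'+1) + (b'+1) - 2*j))
              + (if (a'+1) + (b'+1) - 2*j = 0 then 0 else cA (a'+1) (b'+1) j) • OT j) from
      Finset.sum_congr rfl fun j hj => by
        rw [TT_split j _ (by omega), smul_add, my_smul_ite_zero, my_smul_ite_zero, hOT,
          show (a'+1) + (b'+1) - 2*j - 1 = a' + b' + 1 - 2*j by omega]]
    rw [Finset.sum_add_distrib]
    congr 1
    · rw [Finset.sum_range_succ']
      rw [show (∑ i ∈ Finset.range (min (a'+1) (b'+1)),
            (if i+1 = 0 then 0 else cA (a'+1) (b'+1) (i+1)) •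
              Pre [false, false, true] (WW (i+1-1) ((a'+1) + (b'+1) - 2*(i+1))))
          = ∑ i ∈ Finset.range (min (a'+1) (b'+1)), cA (a'+1) (b'+1) (i+1) • OW i from
        Finset.sum_congr rfl fun i _ => by
          rw [if_neg (Nat.succ_ne_zero i), hOW, show (i+1-1) = i from rfl,
            show (a'+1) + (b'+1) - 2*(i+1) = a' + b' - 2*i by omega]]
      rw [if_pos rfl, zero_smul, add_zero]
      exact sum_ext (by omega) _ _
    · exact sum_ext (by omega) _ _
  rw [hR, add_add_add_comm]
  have eqT : (∑ j ∈ Finset.range K, (if j < min a' (b'+1) + 1 then cA a' (b'+1) j else 0) • OT j)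
      + (∑ j ∈ Finset.range K, (if j < min b' (a'+1) + 1 then cA b' (a'+1) j else 0) • OT j)
      = ∑ j ∈ Finset.range K,
          (if j < min (a'+1) (b'+1) + 1 then
            (if (a'+1) + (b'+1) - 2*j = 0 then 0 else cA (a'+1) (b'+1) j) else 0) • OT j := by
    rw [← Finset.sum_add_distrib]
    refine Finset.sum_congr rfl fun j _ => ?_
    rw [← add_smul]
    congr 1
    by_cases h1 : j ≤ a' ∧ j ≤ b'
    · rw [if_pos (by omega), if_pos (by omega), if_pos (by omega), if_neg (by omega)]
      obtain ⟨p, rfl⟩ : ∃ p, a' = j + p := ⟨a' - j, by omega⟩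
      obtain ⟨q, rfl⟩ : ∃ q, b' = j + q := ⟨b' - j, by omega⟩
      rw [cA, cA, cA, show (j+p) + ((j+q)+1) - 2*j = p+q+1 by omega,
        show ((j+q)+1) - j = q+1 by omega,
        show (j+q) + ((j+p)+1) - 2*j = p+q+1 by omega,
        show ((j+p)+1) - j = p+1 by omega,
        show ((j+p)+1) + ((j+q)+1) - 2*j = p+q+2 by omega,
        ← pascalN2 p q]
      push_cast
      ring
    · by_cases h2 : j = a'+1 ∧ j ≤ b'
      · rw [if_neg (by omega), if_pos (by omega), if_pos (by omega), if_neg (by omega),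
          cA, cA, show ((a'+1)) - j = 0 by omega, Nat.choose_zero_right,
          show ((b'+1)) - j = (a'+1) + (b'+1) - 2*j by omega, Nat.choose_self]
        push_cast
        ring
      · by_cases h3 : j = b'+1 ∧ j ≤ a'
        · rw [if_pos (by omega), if_neg (by omega), if_pos (by omega), if_neg (by omega),
            cA, cA, show ((b'+1)) - j = 0 by omega, Nat.choose_zero_right,
            Nat.choose_zero_right]
          ring
        · rw [if_neg (by omega), if_neg (by omega), add_zero]
          by_cases h : j < min (a'+1) (b'+1) + 1
          · rw [if_pos h, if_pos (by omega)]
          · rw [if_neg h]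
  have eqW : (∑ j ∈ Finset.range K, (if j < min (a'+1) (b'+1) then cB a' (b'+1) j else 0) • OW j)
      + (∑ j ∈ Finset.range K, (if j < min (b'+1) (a'+1) then cB b' (a'+1) j else 0) • OW j)
      = ∑ i ∈ Finset.range K, (if i < min (a'+1) (b'+1) then cA (a'+1) (b'+1) (i+1) else 0) • OW i := by
    rw [← Finset.sum_add_distrib]
    refine Finset.sum_congr rfl fun i _ => ?_
    rw [← add_smul]
    congr 1
    by_cases h : i < min (a'+1) (b'+1)
    · rw [if_pos (by omega), if_pos (by omega), if_pos h]
      obtain ⟨p, rfl⟩ : ∃ p, a' = i + p := ⟨a' - i, by omega⟩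
      obtain ⟨q, rfl⟩ : ∃ q, b' = i + q := ⟨b' - i, by omega⟩
      rw [cB, cB, cA, show (i+p) + ((i+q)+1) - 2*i - 1 = p+q by omega,
        show ((i+q)+1) - i - 1 = q by omega,
        show (i+q) + ((i+p)+1) - 2*i - 1 = p+q by omega,
        show ((i+p)+1) - i - 1 = p by omega,
        show ((i+p)+1) + ((i+q)+1) - 2*(i+1) = p+q by omega,
        show ((i+q)+1) - (i+1) = q by omega,
        chooseswap p q]
      ring
    · rw [if_neg (by omega), if_neg (by omega), if_neg h, add_zero]
  rw [eqT, eqW]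
  exact add_comm _ _

lemma PA_left_zero (b : ℕ) : PA 0 b := by
  unfold PA
  rw [show zw 0 = [] from rfl, SH_nil_left]
  rw [show min 0 b = 0 from by omega, Finset.sum_range_one, TT_zero]
  rw [show (0 + b - 2*0) = b by omega, cA, show (0 + b - 2*0) = b by omega,
    show b - 0 = b by omega, Nat.choose_self]
  simp

lemma PA_right_zero (a : ℕ) : PA a 0 := by
  unfold PA
  rw [show zw 0 = [] from rfl, SH_nil_right]
  rw [show min a 0 = 0 from by omega, Finset.sum_range_one, TT_zero]
  rw [show (a + 0 - 2*0) = a by omega, cA, show (a + 0 - 2*0) = a by omega,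
    show (0 : ℕ) - 0 = 0 from rfl, Nat.choose_zero_right]
  simp

lemma PB_right_zero (a : ℕ) : PB a 0 := by
  unfold PB
  rw [show zw 0 = [] from rfl, SH_nil_right]
  rw [show min a 0 = 0 from by omega, Finset.sum_range_one, TT_zero,
    show min (a+1) 0 = 0 from by omega, Finset.range_zero, Finset.sum_empty, add_zero]
  rw [show (a + 0 - 2*0) = a by omega, cA, show (a + 0 - 2*0) = a by omega,
    show (0 : ℕ) - 0 = 0 from rfl, Nat.choose_zero_right, Pre_single]
  simp

lemma PA_PB_all : ∀ N a b : ℕ, a + b = N → PA a b ∧ PB a b := by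
  intro N
  induction N using Nat.strong_induction_on with
  | _ N ih =>
    intro a b hab
    have hPA : PA a b := by
      match a, b with
      | 0, b => exact PA_left_zero b
      | a + 1, 0 => exact PA_right_zero (a + 1)
      | a' + 1, b' + 1 =>
        exact step_PA a' b'
          ((ih (a' + (b' + 1)) (by omega) a' (b' + 1) rfl).2)
          ((ih (b' + (a' + 1)) (by omega) b' (a' + 1) rfl).2)
    refine ⟨hPA, ?_⟩
    match b with
    | 0 => exact PB_right_zero a
    | c + 1 =>
      exact step_PB a c hPA
        ((ih (a + c) (by omega) a c rfl).2)
        ((ih (c + a) (by omega) c a rfl).2)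

def bta (k : ℕ) : List Bool := List.replicate (k - 1) false ++ [true]

lemma toWord_eq (ks : List ℕ) : toWord ks = (ks.reverse.map bta).flatten := rfl

lemma toWord_replicate2 (a : ℕ) : toWord (List.replicate a 2) = zw a := by
  rw [toWord_eq, List.reverse_replicate, List.map_replicate, zw,
    show bta 2 = [false, true] from rfl]

lemma Lk_succ' (k : ℕ) :
    Lk (k + 1) = Lk k ++ [[false, false, true], [true]] := by
  rw [Lk, Lk, List.replicate_succ', List.flatten_append]
  simp

lemma rep13_succ (k : ℕ) : rep13 (k + 1) = [1, 3] ++ rep13 k := by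
  rw [rep13, rep13, List.replicate_succ, List.flatten_cons]

lemma rev_rep13_map (k : ℕ) : ((rep13 k).reverse).map bta = Lk k := by
  induction k with
  | zero => rfl
  | succ k ih =>
      rw [rep13_succ, List.reverse_append, List.map_append, ih, Lk_succ']
      rfl

lemma rev_rep2_map (n : ℕ) : ((List.replicate n 2).reverse).map bta = Rb n := by
  rw [List.reverse_replicate, List.map_replicate, Rb, show bta 2 = [false, true] from rfl]

lemma shuffles_bridge (k n : ℕ) :
    (shuffles (rep13 k) (List.replicate n 2)).map toWord
      = (shuffles (Lk k) (Rb n)).map List.flatten := by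
  have h1 : (shuffles (rep13 k) (List.replicate n 2)).map toWord
      = (((shuffles (rep13 k) (List.replicate n 2)).map List.reverse).map
          (List.map bta)).map List.flatten := by
    rw [Multiset.map_map, Multiset.map_map]
    exact Multiset.map_congr rfl fun t _ => rfl
  rw [h1, shuffles_reverse, shuffles_map, rev_rep13_map, rev_rep2_map]

lemma fromWordAux_rep (i : ℕ) : ∀ (c : ℕ) (w : List Bool),
    fromWordAux (List.replicate i false ++ true :: w) c = (c + i + 1) :: fromWordAux w 0 := by
  induction i with
  | zero => intro c w; rfl
  | succ i ih =>
      intro c w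
      rw [List.replicate_succ, List.cons_append, show fromWordAux (false :: (List.replicate i false ++ true :: w)) c = fromWordAux (List.replicate i false ++ true :: w) (c + 1) from rfl, ih]
      congr 1
      omega

lemma fromWord_toWord : ∀ (t : List ℕ), (∀ x ∈ t, 0 < x) → fromWord (toWord t) = t := by
  intro t
  induction t using List.reverseRecOn with
  | nil => intro _; rfl
  | append_singleton s k ih =>
      intro hpos
      have hk : 0 < k := hpos k (by simp)
      have hs : ∀ x ∈ s, 0 < x := fun x hx => hpos x (by simp [hx])
      have ht : toWord (s ++ [k]) = List.replicate (k-1) false ++ true :: toWord s := by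
        rw [toWord_eq, List.reverse_append, List.map_append, List.flatten_append,
          toWord_eq]
        simp [bta]
      rw [fromWord, ht, fromWordAux_rep, show 0 + (k-1) + 1 = k by omega]
      rw [List.reverse_cons]
      congr 1
      exact ih hs

lemma pos_of_mem_sh13 (k n : ℕ) (t : List ℕ) (ht : t ∈ shuffles (rep13 k) (List.replicate n 2)) :
    ∀ x ∈ t, 0 < x := by
  intro x hx
  have hperm := perm_of_mem_shuffles _ _ _ ht
  have hmem : x ∈ rep13 k ++ List.replicate n 2 := hperm.mem_iff.1 hx
  rcases List.mem_append.1 hmem with h | h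
  · rw [rep13] at h
    simp only [List.mem_flatten, List.mem_replicate] at h
    obtain ⟨L, ⟨_, rfl⟩, hxL⟩ := h
    have : x = 1 ∨ x = 3 := by simpa using hxL
    omega
  · rw [List.eq_of_mem_replicate h]
    omega

lemma shT_eq (k n : ℕ) :
    shT (rep13 k) (List.replicate n 2) = Finsupp.mapDomain fromWord (TT k n) := by
  rw [TT, SH, mapDomain_msum, show ((shuffles (Lk k) (Rb n)).map
      fun w => Finsupp.single (List.flatten w) (1:ℚ))
      = ((shuffles (Lk k) (Rb n)).map List.flatten).map fun w => Finsupp.single w (1:ℚ) from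
    (Multiset.map_map (fun w => Finsupp.single w (1:ℚ)) List.flatten (shuffles (Lk k) (Rb n))).symm,
    ← shuffles_bridge, mapDomain_msum, Multiset.map_map, shT]
  exact congrArg Multiset.sum (Multiset.map_congr rfl fun t ht => by
    simp only [Function.comp]
    rw [fromWord_toWord t (pos_of_mem_sh13 k n t ht)])

lemma shW_eq (a b : ℕ) :
    shW (List.replicate a 2) (List.replicate b 2)
      = Finsupp.mapDomain fromWord (SH (zw a) (zw b)) := by
  rw [shW, SH, mapDomain_msum, toWord_replicate2, toWord_replicate2]


/-- Muneta's identity (Murahara–Onozuka–Seki, Lemma 1): an identity in the ℚ-vector space `ℜ`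
spanned by all indices, relating the `⧢`-sum of `{1,3}^l` and `{2}^m` to shuffle products. -/
theorem stmt12 (l m : ℕ) :
    (4 : ℚ) ^ l • shT (rep13 l) (List.replicate m 2)
      = shW (List.replicate (l + m) 2) (List.replicate l 2)
        - ∑ k ∈ Finset.range l,
            ((4 : ℚ) ^ k * ((2 * l + m - 2 * k).choose (l - k) : ℚ)) •
              shT (rep13 k) (List.replicate (2 * l + m - 2 * k) 2) := by
  have hPA := (PA_PB_all ((l + m) + l) (l + m) l rfl).1
  unfold PA at hPA
  have h2 := congrArg (Finsupp.mapDomain fromWord) hPA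
  rw [← shW_eq] at h2
  rw [show Finsupp.mapDomain fromWord
        (∑ j ∈ Finset.range (min (l + m) l + 1), cA (l + m) l j • TT j ((l + m) + l - 2*j))
      = ∑ j ∈ Finset.range (min (l + m) l + 1),
          cA (l + m) l j • Finsupp.mapDomain fromWord (TT j ((l + m) + l - 2*j)) from by
    rw [show Finsupp.mapDomain fromWord
        (∑ j ∈ Finset.range (min (l + m) l + 1), cA (l + m) l j • TT j ((l + m) + l - 2*j))
      = Finsupp.mapDomain.addMonoidHom fromWord
        (∑ j ∈ Finset.range (min (l + m) l + 1), cA (l + m) l j • TT j ((l + m) + l - 2*j)) from rfl,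
      map_sum]
    exact Finset.sum_congr rfl fun j _ => by
      show Finsupp.mapDomain fromWord _ = _
      rw [Finsupp.mapDomain_smul]] at h2
  rw [show (∑ j ∈ Finset.range (min (l + m) l + 1),
        cA (l + m) l j • Finsupp.mapDomain fromWord (TT j ((l + m) + l - 2*j)))
      = ∑ j ∈ Finset.range (l + 1),
          ((4 : ℚ) ^ j * ((2 * l + m - 2 * j).choose (l - j) : ℚ)) •
            shT (rep13 j) (List.replicate (2 * l + m - 2 * j) 2) from by
    rw [show min (l + m) l + 1 = l + 1 by omega]
    refine Finset.sum_congr rfl fun j _ => ?_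
    rw [show (l + m) + l - 2*j = 2 * l + m - 2 * j by omega, ← shT_eq, cA,
      show (l + m) + l - 2*j = 2 * l + m - 2 * j by omega,
      show l - j = l - j from rfl]] at h2
  rw [Finset.sum_range_succ] at h2
  rw [show (2 * l + m - 2 * l) = m by omega, show l - l = 0 by omega,
    Nat.choose_zero_right] at h2
  rw [eq_sub_iff_add_eq, add_comm]
  rw [h2]
  congr 1
  push_cast
  ring
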